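/- arXiv:2010.13479 — 3 statements merged into one kernel-verified Lean document; each statement's English description precedes it below -/
import Mathlib

section
/- (Well-balanced property of IMEX-Peer methods) Consider the IMEX-Peer update w_{n+1} = P w_n + Δt Q̂ F0(w_n) + Δt R̂ F0(w_{n+1}) + Δt Q F1(w_n) + Δt R F1(w_{n+1}), with Q̂ = Q + R S1 and R̂ = R S2, where P e = e and S1 = (I_s - S2) V0 V1^{-1}. Suppose all stage values of w_n are equal, w_n = e ⊗ v with F0(v) + F1(v) = 0, and the update equation has a unique solution w_{n+1}. Then w_{n+1} = w_n. -/
/-- Blockwise action of an `s × s` matrix on a stage vector (Kronecker product `M ⊗ I_m`). -/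
noncomputable def blockMul {s m : ℕ} (M : Matrix (Fin s) (Fin s) ℝ)
    (w : Fin s → (Fin m → ℝ)) : Fin s → (Fin m → ℝ) :=
  fun i => ∑ j, M i j • w j

/-- Well-balanced property of IMEX-Peer methods. -/
theorem imex_peer_well_balanced {n m : ℕ}
    (c : Fin (n + 1) → ℝ) (hc : Function.Injective c) (hclast : c (Fin.last n) = 1)
    (V0 V1 : Matrix (Fin (n + 1)) (Fin (n + 1)) ℝ)
    (hV0 : ∀ i j, V0 i j = c i ^ (j : ℕ))
    (hV1 : ∀ i j, V1 i j = (c i - 1) ^ (j : ℕ))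
    (hV1unit : IsUnit V1.det)
    (P Q R S1 S2 : Matrix (Fin (n + 1)) (Fin (n + 1)) ℝ)
    (hP : P.mulVec (fun _ => (1 : ℝ)) = fun _ => (1 : ℝ))
    (hS1 : S1 = (1 - S2) * (V0 * V1⁻¹))
    (F0 F1 : (Fin m → ℝ) → (Fin m → ℝ))
    (Δt : ℝ) (hΔt : 0 < Δt)
    (v : Fin m → ℝ) (hv : F0 v + F1 v = 0)
    (wn : Fin (n + 1) → (Fin m → ℝ)) (hwn : wn = fun _ => v)
    (wnext : Fin (n + 1) → (Fin m → ℝ))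
    (heq : wnext = blockMul P wn
        + Δt • blockMul (Q + R * S1) (fun i => F0 (wn i))
        + Δt • blockMul (R * S2) (fun i => F0 (wnext i))
        + Δt • blockMul Q (fun i => F1 (wn i))
        + Δt • blockMul R (fun i => F1 (wnext i)))
    (huniq : ∀ x y : Fin (n + 1) → (Fin m → ℝ),
      (x = blockMul P wn
        + Δt • blockMul (Q + R * S1) (fun i => F0 (wn i))
        + Δt • blockMul (R * S2) (fun i => F0 (x i))
        + Δt • blockMul Q (fun i => F1 (wn i))
        + Δt • blockMul R (fun i => F1 (x i))) →
      (y = blockMul P wn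
        + Δt • blockMul (Q + R * S1) (fun i => F0 (wn i))
        + Δt • blockMul (R * S2) (fun i => F0 (y i))
        + Δt • blockMul Q (fun i => F1 (wn i))
        + Δt • blockMul R (fun i => F1 (y i))) → x = y) :
    wnext = wn := by
  subst hwn
  set e1 : Fin (n + 1) → ℝ := fun _ => (1 : ℝ) with he1
  -- V1 maps the first basis vector to the all-ones vector
  have hx : V1.mulVec (Pi.single 0 1) = e1 := by
    funext i
    simp [Matrix.mulVec_single, hV1, he1]
  have hinv : V1⁻¹.mulVec e1 = Pi.single 0 1 := by
    rw [← hx, Matrix.mulVec_mulVec, Matrix.nonsing_inv_mul _ hV1unit, Matrix.one_mulVec]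
  have hV0x : V0.mulVec (Pi.single 0 1) = e1 := by
    funext i
    simp [Matrix.mulVec_single, hV0, he1]
  have hS1e : S1.mulVec e1 = e1 - S2.mulVec e1 := by
    rw [hS1, ← Matrix.mulVec_mulVec, ← Matrix.mulVec_mulVec, hinv, hV0x,
      Matrix.sub_mulVec, Matrix.one_mulVec]
  have hrow : ∀ i, (R * S1).mulVec e1 i + (R * S2).mulVec e1 i = R.mulVec e1 i := by
    intro i
    rw [← Matrix.mulVec_mulVec, ← Matrix.mulVec_mulVec, hS1e, Matrix.mulVec_sub]
    simp
  have hblock : ∀ (M : Matrix (Fin (n + 1)) (Fin (n + 1)) ℝ) (u : Fin m → ℝ),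
      blockMul M (fun _ => u) = fun i => (M.mulVec e1 i) • u := by
    intro M u
    funext i
    simp [blockMul, Matrix.mulVec, dotProduct, he1, Finset.sum_smul]
  have hF1 : F1 v = -(F0 v) := by
    exact (neg_eq_of_add_eq_zero_right hv).symm
  have hfix : (fun _ : Fin (n + 1) => v) = blockMul P (fun _ => v)
      + Δt • blockMul (Q + R * S1) (fun _ => F0 v)
      + Δt • blockMul (R * S2) (fun _ => F0 v)
      + Δt • blockMul Q (fun _ => F1 v)
      + Δt • blockMul R (fun _ => F1 v) := by
    funext i
    have hPi : P.mulVec e1 i = 1 := congrFun hP i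
    have hQS : (Q + R * S1).mulVec e1 i = Q.mulVec e1 i + (R * S1).mulVec e1 i := by
      rw [Matrix.add_mulVec]; rfl
    simp only [Pi.add_apply, Pi.smul_apply, hblock, hF1]
    rw [hQS, hPi, one_smul]
    have h := hrow i
    set q := Q.mulVec e1 i
    set r1 := (R * S1).mulVec e1 i
    set r2 := (R * S2).mulVec e1 i
    set r := R.mulVec e1 i
    match_scalars <;> (try ring) <;> linear_combination (-Δt) * h

  exact huniq wnext (fun _ => v) heq hfix
end

section
/- Verify the well-balanced candidate: under the hypotheses P e = e and R(S1 + S2 - I_s) e = 0, if w_n = e ⊗ v with F0(v) + F1(v) = 0, then w_{n+1} := w_n satisfies the IMEX-Peer update equation w_{n+1} = P w_n + Δt (Q + R S1) F0(w_n) + Δt R S2 F0(w_{n+1}) + Δt Q F1(w_n) + Δt R F1(w_{n+1}). -/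
lemma blockMul_const {s m : ℕ} (M : Matrix (Fin s) (Fin s) ℝ) (v : Fin m → ℝ) (i : Fin s) :
    blockMul M (fun _ => v) i = (M.mulVec (fun _ => (1 : ℝ)) i) • v := by
  simp [blockMul, Matrix.mulVec, dotProduct, Finset.sum_smul]

/-- The constant stage vector `w_{n+1} = w_n = e ⊗ v` satisfies the
IMEX-Peer update equation when `P e = e`, `R (S1 + S2 - I) e = 0` and
`F0(v) + F1(v) = 0`. -/
theorem imex_peer_well_balanced_candidate {s m : ℕ}
    (P Q R S1 S2 : Matrix (Fin s) (Fin s) ℝ)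
    (hP : P.mulVec (fun _ => (1 : ℝ)) = fun _ => (1 : ℝ))
    (hR : (R * (S1 + S2 - 1)).mulVec (fun _ => (1 : ℝ)) = 0)
    (F0 F1 : (Fin m → ℝ) → (Fin m → ℝ))
    (Δt : ℝ) (v : Fin m → ℝ) (hv : F0 v + F1 v = 0)
    (wn : Fin s → (Fin m → ℝ)) (hwn : wn = fun _ => v) :
    wn = blockMul P wn
        + Δt • blockMul (Q + R * S1) (fun i => F0 (wn i))
        + Δt • blockMul (R * S2) (fun i => F0 (wn i))
        + Δt • blockMul Q (fun i => F1 (wn i))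
        + Δt • blockMul R (fun i => F1 (wn i)) := by
  subst hwn
  have h1 : F1 v = -F0 v := eq_neg_of_add_eq_zero_right hv
  funext i
  have hsplit : (R * (S1 + S2 - 1)) = R * S1 + R * S2 - R := by
    rw [mul_sub, mul_add, mul_one]
  rw [hsplit] at hR
  have hR' : (R * S1).mulVec (fun _ => (1:ℝ)) i + (R * S2).mulVec (fun _ => (1:ℝ)) i
      - R.mulVec (fun _ => (1:ℝ)) i = 0 := by
    have := congrFun hR i
    simpa [Matrix.sub_mulVec, Matrix.add_mulVec] using this
  simp only [Pi.add_apply, Pi.smul_apply, blockMul_const, Matrix.add_mulVec]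
  rw [congrFun hP i, h1]
  set a := (Q).mulVec (fun _ => (1:ℝ)) i
  set b := (R * S1).mulVec (fun _ => (1:ℝ)) i
  set c := (R * S2).mulVec (fun _ => (1:ℝ)) i
  set d := (R).mulVec (fun _ => (1:ℝ)) i
  have hbcd : b + c - d = 0 := hR'
  funext x
  simp only [Pi.add_apply, Pi.smul_apply, Pi.neg_apply, Pi.one_apply, smul_eq_mul]
  linear_combination (-(Δt * F0 v x)) * hbcd
end

section
/- (Approximate well-balancing) Suppose F0 and F1 are Lipschitz continuous with constants L0, L1, the IMEX-Peer coefficients satisfy P e = e and R(S1+S2-I_s)e = 0, F0(w_{n,s}) + F1(w_{n,s}) = 0, and ‖w_{n,i} - w_{n,s}‖ ≤ ε for all i = 1,...,s-1. If w_{n+1} solves the IMEX-Peer update, then ‖w_{n+1} - e ⊗ w_{n,s}‖ ≤ C ε for some constant C depending only on the method coefficients, Δt, L0, L1 (for Δt small enough that the implicit equation is a contraction). -/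
set_option maxHeartbeats 1000000


lemma blockMul_sub {s m : ℕ} (M : Matrix (Fin s) (Fin s) ℝ)
    (x y : Fin s → (Fin m → ℝ)) :
    blockMul M (x - y) = blockMul M x - blockMul M y := by
  funext i
  simp [blockMul, Pi.sub_apply, smul_sub, Finset.sum_sub_distrib]

lemma blockMul_norm_le {s m : ℕ} (M : Matrix (Fin s) (Fin s) ℝ)
    (w : Fin s → (Fin m → ℝ)) :
    ‖blockMul M w‖ ≤ (∑ i, ∑ j, |M i j|) * ‖w‖ := by
  rw [pi_norm_le_iff_of_nonneg (by positivity)]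
  intro i
  show ‖∑ j, M i j • w j‖ ≤ _
  calc ‖∑ j, M i j • w j‖ ≤ ∑ j, ‖M i j • w j‖ := norm_sum_le _ _
    _ = ∑ j, |M i j| * ‖w j‖ := by simp [norm_smul]
    _ ≤ ∑ j, |M i j| * ‖w‖ :=
        Finset.sum_le_sum fun j _ =>
          mul_le_mul_of_nonneg_left (norm_le_pi_norm w j) (abs_nonneg _)
    _ = (∑ j, |M i j|) * ‖w‖ := by rw [Finset.sum_mul]
    _ ≤ (∑ i, ∑ j, |M i j|) * ‖w‖ :=
        mul_le_mul_of_nonneg_right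
          (Finset.single_le_sum (f := fun i => ∑ j, |M i j|)
            (fun i _ => Finset.sum_nonneg fun j _ => abs_nonneg _) (Finset.mem_univ i))
          (norm_nonneg _)

/-- Approximate well-balancing. If the last stage is at equilibrium
and all stages agree up to `ε`, then the next stage vector agrees with the
constant equilibrium stage vector up to `C ε`, with `C` independent of `ε` and
of the stage data. -/
theorem imex_peer_approx_well_balanced {n m : ℕ}
    (P Q R S1 S2 : Matrix (Fin (n + 1)) (Fin (n + 1)) ℝ)
    (hP : P.mulVec (fun _ => (1 : ℝ)) = fun _ => (1 : ℝ))
    (hRe : (R * (S1 + S2 - 1)).mulVec (fun _ => (1 : ℝ)) = 0)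
    (Δt : ℝ) (hΔt : 0 < Δt) (L0 L1 : NNReal)
    (F0 F1 : (Fin m → ℝ) → (Fin m → ℝ))
    (hF0 : LipschitzWith L0 F0) (hF1 : LipschitzWith L1 F1)
    -- `Δt` small enough that the implicit part of the update is a contraction:
    (K : ℝ) (hK : K < 1)
    (hcontr : ∀ x y : Fin (n + 1) → (Fin m → ℝ),
      ‖(Δt • blockMul (R * S2) (fun i => F0 (x i)) + Δt • blockMul R (fun i => F1 (x i)))
        - (Δt • blockMul (R * S2) (fun i => F0 (y i)) + Δt • blockMul R (fun i => F1 (y i)))‖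
        ≤ K * ‖x - y‖) :
    ∃ C : ℝ, 0 ≤ C ∧ ∀ ε : ℝ, 0 ≤ ε →
      ∀ wn wnext : Fin (n + 1) → (Fin m → ℝ),
        F0 (wn (Fin.last n)) + F1 (wn (Fin.last n)) = 0 →
        (∀ i, ‖wn i - wn (Fin.last n)‖ ≤ ε) →
        (wnext = blockMul P wn
            + Δt • blockMul (Q + R * S1) (fun i => F0 (wn i))
            + Δt • blockMul (R * S2) (fun i => F0 (wnext i))
            + Δt • blockMul Q (fun i => F1 (wn i))
            + Δt • blockMul R (fun i => F1 (wnext i))) →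
        ‖wnext - fun _ => wn (Fin.last n)‖ ≤ C * ε := by
  classical
  have hKpos : 0 < 1 - K := by linarith
  set CP : ℝ := ∑ i, ∑ j, |P i j| with hCPdef
  set C1 : ℝ := ∑ i, ∑ j, |(Q + R * S1) i j| with hC1def
  set CQ : ℝ := ∑ i, ∑ j, |Q i j| with hCQdef
  have hCPn : 0 ≤ CP := by positivity
  have hC1n : 0 ≤ C1 := by positivity
  have hCQn : 0 ≤ CQ := by positivity
  set A : ℝ := CP + Δt * (C1 * (L0 : ℝ)) + Δt * (CQ * (L1 : ℝ)) with hAdef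
  have hAn : 0 ≤ A := by positivity
  refine ⟨A / (1 - K), div_nonneg hAn hKpos.le, ?_⟩
  intro ε hε wn wnext heq hclose hupd
  set ws := wn (Fin.last n) with hws
  set u : Fin (n + 1) → (Fin m → ℝ) := fun _ => ws with hu
  have hg1 : F1 ws = - F0 ws := by
    rw [add_comm] at heq
    exact add_eq_zero_iff_eq_neg.mp heq
  -- the equilibrium stage vector is a fixed point of the update
  have hfix : blockMul P u + Δt • blockMul (Q + R * S1) (fun _ => F0 ws)
      + Δt • blockMul (R * S2) (fun _ => F0 ws)
      + Δt • blockMul Q (fun _ => F1 ws)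
      + Δt • blockMul R (fun _ => F1 ws) = u := by
    have hmat : R * (S1 + S2 - 1) = R * S1 + R * S2 - R := by noncomm_ring
    funext i
    have hPe : (∑ j, P i j) = 1 := by
      have h := congrFun hP i
      simpa [Matrix.mulVec, dotProduct] using h
    have hRe' : (∑ j, (R * S1) i j) + (∑ j, (R * S2) i j) = ∑ j, R i j := by
      have h := congrFun hRe i
      rw [hmat] at h
      have h2 : (∑ j, ((R * S1) i j + (R * S2) i j - R i j)) = 0 := by
        simpa [Matrix.mulVec, dotProduct, Matrix.sub_apply, Matrix.add_apply] using h
      have h3 : (∑ j, ((R * S1) i j + (R * S2) i j - R i j))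
          = (∑ j, (R * S1) i j) + (∑ j, (R * S2) i j) - ∑ j, R i j := by
        rw [Finset.sum_sub_distrib, Finset.sum_add_distrib]
      rw [h3] at h2
      linarith
    show (∑ j, P i j • u j) + Δt • (∑ j, (Q + R * S1) i j • F0 ws)
        + Δt • (∑ j, (R * S2) i j • F0 ws)
        + Δt • (∑ j, Q i j • F1 ws)
        + Δt • (∑ j, R i j • F1 ws) = ws
    have e1 : (∑ j, P i j • u j) = ws := by
      rw [show (∑ j, P i j • u j) = (∑ j, P i j) • ws from by
        rw [Finset.sum_smul], hPe, one_smul]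
    rw [e1, hg1]
    have e2 : ∀ (M : Matrix (Fin (n+1)) (Fin (n+1)) ℝ) (c : Fin m → ℝ),
        (∑ j, M i j • c) = (∑ j, M i j) • c := fun M c => by rw [Finset.sum_smul]
    rw [e2, e2, e2, e2]
    have hsplit : (∑ j, (Q + R * S1) i j) = (∑ j, Q i j) + ∑ j, (R * S1) i j := by
      simp [Matrix.add_apply, Finset.sum_add_distrib]
    rw [hsplit, ← hRe']
    set a := ∑ j, Q i j
    set b := ∑ j, (R * S1) i j
    set c := ∑ j, (R * S2) i j
    set g := F0 ws
    have : Δt • ((a + b) • g) + Δt • (c • g) + Δt • (a • -g) + Δt • ((b + c) • -g) = 0 := by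
      module
    rw [add_assoc, add_assoc, add_assoc, ← add_assoc (Δt • ((a+b) • g)),
      ← add_assoc (Δt • ((a+b) • g) + Δt • (c • g)), this, add_zero]
  -- the difference equation
  have hdiff : wnext - u =
      blockMul P (wn - u)
      + Δt • blockMul (Q + R * S1) ((fun i => F0 (wn i)) - fun _ => F0 ws)
      + Δt • blockMul Q ((fun i => F1 (wn i)) - fun _ => F1 ws)
      + ((Δt • blockMul (R * S2) (fun i => F0 (wnext i))
            + Δt • blockMul R (fun i => F1 (wnext i)))
        - (Δt • blockMul (R * S2) (fun i => F0 (u i))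
            + Δt • blockMul R (fun i => F1 (u i)))) := by
    have hu0 : (fun i => F0 (u i)) = fun _ : Fin (n + 1) => F0 ws := rfl
    have hu1 : (fun i => F1 (u i)) = fun _ : Fin (n + 1) => F1 ws := rfl
    rw [hu0, hu1, blockMul_sub, blockMul_sub, blockMul_sub, smul_sub, smul_sub]
    conv_lhs => rw [hupd, ← hfix]
    abel
  -- norm estimates
  have hwnu : ‖wn - u‖ ≤ ε := by
    rw [pi_norm_le_iff_of_nonneg hε]
    intro i
    simpa [hu] using hclose i
  have hLip0 : ‖(fun i => F0 (wn i)) - (fun _ : Fin (n+1) => F0 ws)‖ ≤ (L0 : ℝ) * ε := by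
    rw [pi_norm_le_iff_of_nonneg (by positivity)]
    intro i
    have h := hF0.dist_le_mul (wn i) ws
    rw [dist_eq_norm, dist_eq_norm] at h
    calc ‖((fun i => F0 (wn i)) - (fun _ : Fin (n+1) => F0 ws)) i‖
        = ‖F0 (wn i) - F0 ws‖ := rfl
      _ ≤ (L0 : ℝ) * ‖wn i - ws‖ := h
      _ ≤ (L0 : ℝ) * ε := mul_le_mul_of_nonneg_left (hclose i) (by positivity)
  have hLip1 : ‖(fun i => F1 (wn i)) - (fun _ : Fin (n+1) => F1 ws)‖ ≤ (L1 : ℝ) * ε := by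
    rw [pi_norm_le_iff_of_nonneg (by positivity)]
    intro i
    have h := hF1.dist_le_mul (wn i) ws
    rw [dist_eq_norm, dist_eq_norm] at h
    calc ‖((fun i => F1 (wn i)) - (fun _ : Fin (n+1) => F1 ws)) i‖
        = ‖F1 (wn i) - F1 ws‖ := rfl
      _ ≤ (L1 : ℝ) * ‖wn i - ws‖ := h
      _ ≤ (L1 : ℝ) * ε := mul_le_mul_of_nonneg_left (hclose i) (by positivity)
  have h1 : ‖blockMul P (wn - u)‖ ≤ CP * ε :=
    le_trans (blockMul_norm_le P _) (mul_le_mul_of_nonneg_left hwnu hCPn)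
  have h2 : ‖Δt • blockMul (Q + R * S1) ((fun i => F0 (wn i)) - fun _ => F0 ws)‖
      ≤ Δt * (C1 * ((L0 : ℝ) * ε)) := by
    rw [norm_smul, Real.norm_eq_abs, abs_of_pos hΔt]
    refine mul_le_mul_of_nonneg_left ?_ hΔt.le
    exact le_trans (blockMul_norm_le _ _) (mul_le_mul_of_nonneg_left hLip0 hC1n)
  have h3 : ‖Δt • blockMul Q ((fun i => F1 (wn i)) - fun _ => F1 ws)‖
      ≤ Δt * (CQ * ((L1 : ℝ) * ε)) := by
    rw [norm_smul, Real.norm_eq_abs, abs_of_pos hΔt]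
    refine mul_le_mul_of_nonneg_left ?_ hΔt.le
    exact le_trans (blockMul_norm_le _ _) (mul_le_mul_of_nonneg_left hLip1 hCQn)
  have h4 : ‖(Δt • blockMul (R * S2) (fun i => F0 (wnext i))
        + Δt • blockMul R (fun i => F1 (wnext i)))
      - (Δt • blockMul (R * S2) (fun i => F0 (u i))
        + Δt • blockMul R (fun i => F1 (u i)))‖ ≤ K * ‖wnext - u‖ := hcontr wnext u
  have hmain : ‖wnext - u‖ ≤ CP * ε + Δt * (C1 * ((L0 : ℝ) * ε))
      + Δt * (CQ * ((L1 : ℝ) * ε)) + K * ‖wnext - u‖ := by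
    calc ‖wnext - u‖ = ‖_‖ := congrArg norm hdiff
      _ ≤ _ := by
        refine le_trans (norm_add_le _ _) ?_
        refine add_le_add (le_trans (norm_add_le _ _) ?_) h4
        refine add_le_add (le_trans (norm_add_le _ _) ?_) h3
        exact add_le_add h1 h2
  have hA' : A * ε = CP * ε + Δt * (C1 * ((L0 : ℝ) * ε)) + Δt * (CQ * ((L1 : ℝ) * ε)) := by
    rw [hAdef]; ring
  have hexp : ‖wnext - u‖ * (1 - K) = ‖wnext - u‖ - K * ‖wnext - u‖ := by ring
  have h5 : ‖wnext - u‖ * (1 - K) ≤ A * ε := by rw [hA', hexp]; linarith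
  have h6 : ‖wnext - u‖ ≤ A * ε / (1 - K) := (le_div_iff₀ hKpos).mpr h5
  have h7 : A / (1 - K) * ε = A * ε / (1 - K) := by ring
  rw [h7]; exact h6
end
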